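/- Let Δ > 0 and let f : ℝ → ℝ be continuous. For each integer n ≥ 0 define the translated scaled Legendre function l_n(x, t) = √(2n+1)·P_n(2(x−t)/Δ + 1) and the coefficient c_n(t) = (1/Δ)·∫_{t−Δ}^{t} f(x)·l_n(x, t) dx. Then each c_n is differentiable in t and satisfies the exact linear differential equation c_n'(t) = −(2/Δ)·Σ_{i odd, 1 ≤ i ≤ n} √((2(n−i)+1)·(2n+1))·c_{n−i}(t) + (√(2n+1)/Δ)·(f(t) − (−1)^n·f(t−Δ)). -/

import Mathlib

/-!
View `P_n` as a polynomial. For any polynomial `p`, differentiating the window integral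
`τ ↦ ∫_{τ-Δ}^{τ} f(x) p(a(x-τ)+b) dx` gives the boundary terms `f(τ)p(b) - f(τ-Δ)p(b-aΔ)` plus
`-a ∫ f(x) p'(a(x-τ)+b) dx`; by linearity it suffices to pass from `p` to `X * p`, which only
changes the weight `f(x)` to `a x f(x)`, so continuity of `f` is all that is needed.
For `p = P_n`, `a = 2/Δ`, `b = 1` the boundary values are `P_n(1) = 1`, `P_n(-1) = (-1)^n`, and
`P_n' = Σ_{i odd} (2(n-i)+1) P_{n-i}` follows from `P_{n+2}' = P_n' + (2n+3) P_{n+1}`, which is the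
`(n+1)`-st derivative of `D²(X²-1)^{n+2} = 2(n+2)(2n+3)(X²-1)^{n+1} + 4(n+1)(n+2)(X²-1)^n`.
-/

open MeasureTheory Set

noncomputable def legendreP (n : ℕ) (y : ℝ) : ℝ :=
  (1 / ((2 : ℝ) ^ n * (n.factorial : ℝ))) *
    iteratedDeriv n (fun x : ℝ => (x ^ 2 - 1) ^ n) y

noncomputable def hzeta (s a : ℝ) : ℝ := ∑' k : ℕ, ((k : ℝ) + a) ^ (-s)

/-- Translated scaled Legendre function l_n(x, t) = √(2n+1)·P_n(2(x−t)/Δ + 1). -/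
noncomputable def ltrans (Δ t : ℝ) (n : ℕ) (x : ℝ) : ℝ :=
  Real.sqrt (2 * (n : ℝ) + 1) * legendreP n (2 * (x - t) / Δ + 1)

/-- Coefficient c_n(t) = (1/Δ)·∫_{t−Δ}^{t} f(x)·l_n(x, t) dx. -/
noncomputable def coefDt (Δ t : ℝ) (f : ℝ → ℝ) (n : ℕ) : ℝ :=
  (1 / Δ) * ∫ x in (t - Δ)..t, f x * ltrans Δ t n x

/-- Truncated Legendre reconstruction ĝ_N(x) = Σ_{n=0}^{N−1} c_n·l_n(x). -/
noncomputable def reconDt (Δ t : ℝ) (f : ℝ → ℝ) (N : ℕ) (x : ℝ) : ℝ :=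
  ∑ n ∈ Finset.range N, coefDt Δ t f n * ltrans Δ t n x

open Polynomial Nat

theorem eval_iterate_derivative_X_sub_C_pow_mul {R : Type*} [CommRing R] (c : R) (n : ℕ)
    (p : R[X]) : (derivative^[n] ((X - C c) ^ n * p)).eval c = n ! * p.eval c := by
  induction n generalizing p with
  | zero => simp
  | succ n ih =>
    have hd : derivative ((X - C c) ^ (n + 1) * p)
        = (X - C c) ^ n * (C ((n : R) + 1) * p + (X - C c) * derivative p) := by
      simp only [derivative_mul, derivative_pow, derivative_sub, derivative_X, derivative_C]
      push_cast
      ring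
    rw [Function.iterate_succ_apply, hd, ih]
    simp [factorial_succ]
    ring

noncomputable def legendre (n : ℕ) : ℝ[X] :=
  C (1 / (2 ^ n * n ! : ℝ)) * derivative^[n] ((X ^ 2 - 1) ^ n)

theorem iteratedDeriv_eval {𝕜 : Type*} [NontriviallyNormedField 𝕜] (p : 𝕜[X]) (k : ℕ) :
    iteratedDeriv k (fun x => p.eval x) = fun x => (derivative^[k] p).eval x := by
  induction k with
  | zero => rfl
  | succ k ih =>
    ext x
    rw [iteratedDeriv_succ, ih, Function.iterate_succ_apply', Polynomial.deriv]

theorem legendreP_eq_eval_legendre (n : ℕ) (y : ℝ) : legendreP n y = (legendre n).eval y := by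
  have hu : (fun x : ℝ => (x ^ 2 - 1) ^ n) = fun x => ((X ^ 2 - 1) ^ n : ℝ[X]).eval x := by
    ext x; simp
  rw [legendreP, legendre, eval_mul, eval_C, hu, iteratedDeriv_eval]

theorem legendre_one : legendre 1 = X := by
  simp only [legendre, Function.iterate_one, pow_one, derivative_sub, derivative_X_pow,
    derivative_one, sub_zero, ← mul_assoc, ← C_mul]
  norm_num

theorem legendre_eval_one (n : ℕ) : (legendre n).eval 1 = 1 := by
  have h : ((X ^ 2 - 1) ^ n : ℝ[X]) = (X - C 1) ^ n * (X + 1) ^ n := by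
    rw [← mul_pow]; simp only [map_one]; ring
  rw [legendre, eval_mul, eval_C, h, eval_iterate_derivative_X_sub_C_pow_mul]
  simp only [eval_pow, eval_add, eval_X, eval_one]
  field_simp
  norm_num

theorem legendre_eval_neg_one (n : ℕ) : (legendre n).eval (-1) = (-1) ^ n := by
  have h : ((X ^ 2 - 1) ^ n : ℝ[X]) = (X - C (-1)) ^ n * (X - 1) ^ n := by
    rw [← mul_pow]; simp only [map_neg, map_one]; ring
  rw [legendre, eval_mul, eval_C, h, eval_iterate_derivative_X_sub_C_pow_mul]
  simp only [eval_pow, eval_sub, eval_X, eval_one]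
  rw [show (-1 - 1 : ℝ) ^ n = (-1) ^ n * 2 ^ n by rw [← mul_pow]; norm_num]
  field_simp

theorem derivative_derivative_sq_sub_one_pow (n : ℕ) :
    derivative (derivative ((X ^ 2 - 1) ^ (n + 2) : ℝ[X]))
      = C (2 * ((n : ℝ) + 2) * (2 * n + 3)) * (X ^ 2 - 1) ^ (n + 1)
        + C (4 * ((n : ℝ) + 1) * (n + 2)) * (X ^ 2 - 1) ^ n := by
  have hd : ∀ m : ℕ, derivative ((X ^ 2 - 1) ^ (m + 1) : ℝ[X])
      = C (2 * ((m : ℝ) + 1)) * X * (X ^ 2 - 1) ^ m := by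
    intro m
    rw [derivative_pow, derivative_sub, derivative_X_pow, derivative_one]
    simp only [map_mul, map_add, map_natCast, map_ofNat, map_one, Nat.cast_ofNat]
    push_cast
    ring
  rw [hd, derivative_mul, derivative_C_mul_X, hd]
  simp only [map_mul, map_add, map_natCast, map_ofNat, map_one]
  push_cast
  ring

theorem derivative_legendre_add_two (n : ℕ) :
    derivative (legendre (n + 2))
      = derivative (legendre n) + C (2 * (n : ℝ) + 3) * legendre (n + 1) := by
  have h : derivative (derivative^[n + 2] ((X ^ 2 - 1) ^ (n + 2) : ℝ[X]))
      = C (2 * ((n : ℝ) + 2) * (2 * n + 3)) * derivative^[n + 1] ((X ^ 2 - 1) ^ (n + 1))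
        + C (4 * ((n : ℝ) + 1) * (n + 2)) * derivative (derivative^[n] ((X ^ 2 - 1) ^ n)) := by
    rw [← Function.iterate_succ_apply' derivative, Function.iterate_succ_apply,
      Function.iterate_succ_apply, derivative_derivative_sq_sub_one_pow, iterate_map_add,
      iterate_derivative_C_mul, iterate_derivative_C_mul]
    simp only [Function.iterate_succ_apply']
  simp only [legendre, derivative_C_mul, h, mul_add, ← mul_assoc, ← C_mul]
  rw [add_comm]
  congr 3
  · push_cast [factorial_succ]; field_simp; ring
  · push_cast [factorial_succ]; field_simp; ring

theorem derivative_legendre (n : ℕ) :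
    derivative (legendre n) = ∑ i ∈ (Finset.range (n + 1)).filter Odd,
      C (2 * ((n - i : ℕ) : ℝ) + 1) * legendre (n - i) := by
  induction n using Nat.twoStepInduction with
  | zero => rw [show (Finset.range 1).filter Odd = ∅ by decide]; simp [legendre]
  | one =>
    rw [show (Finset.range 2).filter Odd = {1} by decide, Finset.sum_singleton, legendre_one]
    simp [legendre]
  | more n ih _ =>
    have hshift : ∀ i, n + 2 - (i + 1 + 1) = n - i := fun i => by omega
    rw [derivative_legendre_add_two, ih, Finset.sum_filter, Finset.sum_filter,
      Finset.sum_range_succ' _ (n + 2), Finset.sum_range_succ' _ (n + 1)]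
    simp only [hshift, Nat.odd_add_one, not_not, zero_add, odd_one, Nat.not_odd_zero, if_true,
      if_false, add_zero]
    push_cast
    ring_nf

theorem hasDerivAt_integral_window {E : Type*} [NormedAddCommGroup E] [NormedSpace ℝ E]
    [CompleteSpace E] {f : ℝ → E} (hf : Continuous f) (Δ t : ℝ) :
    HasDerivAt (fun τ => ∫ x in (τ - Δ)..τ, f x) (f t - f (t - Δ)) t := by
  have hsplit : (fun τ => ∫ x in (τ - Δ)..τ, f x)
      = fun τ => (∫ x in (0 : ℝ)..τ, f x) - ∫ x in (0 : ℝ)..(τ - Δ), f x := by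
    ext τ
    rw [intervalIntegral.integral_interval_sub_left (hf.intervalIntegrable _ _)
      (hf.intervalIntegrable _ _)]
  rw [hsplit]
  exact (hf.integral_hasStrictDerivAt 0 t).hasDerivAt.sub
    (HasDerivAt.comp_sub_const t Δ (hf.integral_hasStrictDerivAt 0 (t - Δ)).hasDerivAt)

theorem hasDerivAt_integral_window_mul_eval {f : ℝ → ℝ} (hf : Continuous f)
    (p : ℝ[X]) (Δ a b t : ℝ) :
    HasDerivAt (fun τ => ∫ x in (τ - Δ)..τ, f x * p.eval (a * (x - τ) + b))
      (f t * p.eval b - f (t - Δ) * p.eval (b - a * Δ)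
        - a * ∫ x in (t - Δ)..t, f x * (derivative p).eval (a * (x - t) + b)) t := by
  induction p using Polynomial.induction_on generalizing f with
  | C c => simpa using hasDerivAt_integral_window (hf.mul_const c) Δ t
  | add p q hp hq =>
    have hsplit : ∀ (r s : ℝ[X]) τ, (∫ x in (τ - Δ)..τ, f x * (r + s).eval (a * (x - τ) + b))
        = (∫ x in (τ - Δ)..τ, f x * r.eval (a * (x - τ) + b))
          + ∫ x in (τ - Δ)..τ, f x * s.eval (a * (x - τ) + b) := by
      intro r s τ
      rw [← intervalIntegral.integral_add]
      · simp only [eval_add, mul_add]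
      all_goals apply Continuous.intervalIntegrable; fun_prop
    simp only [hsplit p q]
    refine ((hp hf).add (hq hf)).congr_deriv ?_
    rw [derivative_add, hsplit]
    simp only [eval_add]
    ring
  | monomial n c ih =>
    set q := C c * X ^ n
    rw [show C c * X ^ (n + 1) = X * q by ring]
    have hsplit : ∀ τ, (∫ x in (τ - Δ)..τ, f x * (X * q).eval (a * (x - τ) + b))
        = (∫ x in (τ - Δ)..τ, f x * (a * x) * q.eval (a * (x - τ) + b))
          + (b - a * τ) * ∫ x in (τ - Δ)..τ, f x * q.eval (a * (x - τ) + b) := by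
      intro τ
      rw [← intervalIntegral.integral_const_mul, ← intervalIntegral.integral_add]
      · congr 1
        ext x
        simp only [eval_mul, eval_X]
        ring
      all_goals apply Continuous.intervalIntegrable; fun_prop
    have hsplit' : (∫ x in (t - Δ)..t, f x * (derivative (X * q)).eval (a * (x - t) + b))
        = (∫ x in (t - Δ)..t, f x * q.eval (a * (x - t) + b))
          + ((∫ x in (t - Δ)..t, f x * (a * x) * (derivative q).eval (a * (x - t) + b))
            + (b - a * t) * ∫ x in (t - Δ)..t, f x * (derivative q).eval (a * (x - t) + b)) := by
      rw [← intervalIntegral.integral_const_mul, ← intervalIntegral.integral_add,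
        ← intervalIntegral.integral_add]
      · congr 1
        ext x
        simp only [derivative_mul, derivative_X, one_mul, eval_add, eval_mul, eval_X]
        ring
      all_goals apply Continuous.intervalIntegrable; fun_prop
    have hlin : HasDerivAt (fun τ => b - a * τ) (-a) t := by
      simpa using ((hasDerivAt_id t).const_mul a).const_sub b
    simp only [hsplit]
    refine ((ih (by fun_prop)).add (hlin.mul (ih hf))).congr_deriv ?_
    rw [hsplit']
    simp only [eval_mul, eval_X]
    ring

theorem coefDt_eq_integral_mul_eval_legendre (Δ τ : ℝ) (f : ℝ → ℝ) (n : ℕ) :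
    coefDt Δ τ f n = √(2 * n + 1) / Δ
      * ∫ x in (τ - Δ)..τ, f x * (legendre n).eval (2 / Δ * (x - τ) + 1) := by
  simp only [coefDt, ltrans, legendreP_eq_eval_legendre, mul_div_right_comm _ _ Δ,
    ← intervalIntegral.integral_const_mul]
  congr 1
  ext x
  ring

theorem integral_mul_eval_derivative_legendre {f g : ℝ → ℝ} (hf : Continuous f)
    (hg : Continuous g) (n : ℕ) (u v : ℝ) :
    ∫ x in u..v, f x * (derivative (legendre n)).eval (g x)
      = ∑ i ∈ (Finset.range (n + 1)).filter Odd,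
          (2 * ((n - i : ℕ) : ℝ) + 1) * ∫ x in u..v, f x * (legendre (n - i)).eval (g x) := by
  simp only [derivative_legendre, eval_finsetSum, eval_mul, eval_C, Finset.mul_sum]
  rw [intervalIntegral.integral_finsetSum]
  · congr! 1 with i
    rw [← intervalIntegral.integral_const_mul]
    congr 1
    ext x
    ring
  · intro i _
    apply Continuous.intervalIntegrable
    fun_prop

/-- each coefficient c_n(t) is differentiable in t and satisfies the exact
linear differential equation of the HiPPO/translated-Legendre projection. -/
theorem hasDerivAt_coefDt (Δ : ℝ) (hΔ : 0 < Δ) (f : ℝ → ℝ) (hf : Continuous f)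
    (n : ℕ) (t : ℝ) :
    HasDerivAt (fun τ => coefDt Δ τ f n)
      (-(2 / Δ) * (∑ i ∈ (Finset.range (n + 1)).filter (fun i => Odd i),
          Real.sqrt ((2 * ((n - i : ℕ) : ℝ) + 1) * (2 * (n : ℝ) + 1)) * coefDt Δ t f (n - i))
        + (Real.sqrt (2 * (n : ℝ) + 1) / Δ) * (f t - (-1 : ℝ) ^ n * f (t - Δ))) t := by
  have H := (hasDerivAt_integral_window_mul_eval hf (legendre n) Δ (2 / Δ) 1 t).const_mul
    (√(2 * n + 1) / Δ)
  simp only [← coefDt_eq_integral_mul_eval_legendre] at H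
  refine H.congr_deriv ?_
  rw [div_mul_cancel₀ _ hΔ.ne', show (1 : ℝ) - 2 = -1 by norm_num, legendre_eval_one,
    legendre_eval_neg_one, integral_mul_eval_derivative_legendre hf (by fun_prop)]
  have hsum : ∑ i ∈ (Finset.range (n + 1)).filter Odd,
      √((2 * ((n - i : ℕ) : ℝ) + 1) * (2 * n + 1)) * coefDt Δ t f (n - i)
      = √(2 * n + 1) / Δ * ∑ i ∈ (Finset.range (n + 1)).filter Odd, (2 * ((n - i : ℕ) : ℝ) + 1)
          * ∫ x in (t - Δ)..t, f x * (legendre (n - i)).eval (2 / Δ * (x - t) + 1) := by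
    rw [Finset.mul_sum]
    refine Finset.sum_congr rfl fun i _ => ?_
    rw [coefDt_eq_integral_mul_eval_legendre, Real.sqrt_mul (by positivity)]
    have := Real.mul_self_sqrt (by positivity : (0 : ℝ) ≤ 2 * ((n - i : ℕ) : ℝ) + 1)
    linear_combination (√(2 * n + 1) / Δ
      * ∫ x in (t - Δ)..t, f x * (legendre (n - i)).eval (2 / Δ * (x - t) + 1)) * this
  rw [hsum]
  ring
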